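/- There exists a constant C > 0, depending only on h, such that the following holds. Let l ∈ B and u, v ∈ L², and let Φ_u, Φ_v : [0,1] → L² be continuous functions satisfying the Marcus integral equations Φ_u(t) = u + l ∫₀ᵗ ḡ(Φ_u(s)) ds and Φ_v(t) = v + l ∫₀ᵗ ḡ(Φ_v(s)) ds for all t ∈ [0,1]. Define H(l,u) := Φ_u(1) − u − l ḡ(u) and H(l,v) := Φ_v(1) − v − l ḡ(v). Then ‖H(l,u) − H(l,v)‖_{L²} ≤ C ‖u − v‖_{L²}. -/

import Mathlib

/-!
Pointwise, `ḡ v - ḡ w = (v - w) × h` with `|a × b| ≤ |a| |b|`, so `ḡ` is Lipschitz on `L²` with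
constant `‖h‖_∞`. Solutions of the integral equation `Φ t = u + l ∫₀ᵗ ḡ (Φ s) ds` are trajectories
of the Lipschitz vector field `l • ḡ`, so by Grönwall `‖Φ_u 1 - Φ_v 1‖ ≤ e^{‖h‖_∞} ‖u - v‖` as
`|l| < 1`. The remaining terms `u - v` and `l (ḡ u - ḡ v)` are bounded directly.
-/

open MeasureTheory
open scoped RealInnerProductSpace ENNReal

noncomputable def cross3 (a b : EuclideanSpace ℝ (Fin 3)) : EuclideanSpace ℝ (Fin 3) :=
  WithLp.toLp 2 ![a 1 * b 2 - a 2 * b 1, a 2 * b 0 - a 0 * b 2, a 0 * b 1 - a 1 * b 0]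

open Set Filter Topology NNReal

section IntegralEquation

variable {E : Type*} [NormedAddCommGroup E] [NormedSpace ℝ E] [CompleteSpace E]
  {G : E → E} {Φ Ψ : ℝ → E} {a b l : ℝ} {u v : E}

theorem hasDerivWithinAt_Ici_of_eq_add_smul_integral (hG : Continuous G)
    (hΦc : ContinuousOn Φ (Icc a b))
    (hΦ : ∀ t ∈ Icc a b, Φ t = u + l • ∫ s in a..t, G (Φ s)) {t : ℝ} (ht : t ∈ Ico a b) :
    HasDerivWithinAt Φ (l • G (Φ t)) (Ici t) t := by
  have hGΦ : ContinuousOn (fun s => G (Φ s)) (Icc a b) := hG.comp_continuousOn hΦc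
  have hIcc : Icc a b ∈ 𝓝[>] t :=
    mem_of_superset (Ioo_mem_nhdsGT ht.2) (Ioo_subset_Icc_self.trans (Icc_subset_Icc_left ht.1))
  have hint : IntervalIntegrable (fun s => G (Φ s)) volume a t :=
    (hGΦ.mono (Icc_subset_Icc_right ht.2.le)).intervalIntegrable_of_Icc ht.1
  have hderiv : HasDerivWithinAt (fun τ => ∫ s in a..τ, G (Φ s)) (G (Φ t)) (Ici t) t :=
    intervalIntegral.integral_hasDerivWithinAt_right hint
      ((hGΦ.stronglyMeasurableAtFilter_nhdsWithin measurableSet_Icc t).filter_mono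
        (nhdsWithin_le_of_mem hIcc))
      ((hGΦ t (Ico_subset_Icc_self ht)).mono_of_mem_nhdsWithin hIcc)
  refine ((hderiv.const_smul l).const_add u).congr_of_eventuallyEq ?_
    (hΦ t (Ico_subset_Icc_self ht))
  filter_upwards [Ico_mem_nhdsGE ht.2] with s hs
  exact hΦ s ⟨ht.1.trans hs.1, hs.2.le⟩

theorem dist_le_of_eq_add_smul_integral {K : ℝ≥0} (hG : LipschitzWith K G)
    (hΦc : ContinuousOn Φ (Icc a b)) (hΨc : ContinuousOn Ψ (Icc a b))
    (hΦ : ∀ t ∈ Icc a b, Φ t = u + l • ∫ s in a..t, G (Φ s))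
    (hΨ : ∀ t ∈ Icc a b, Ψ t = v + l • ∫ s in a..t, G (Ψ s)) {t : ℝ} (ht : t ∈ Icc a b) :
    dist (Φ t) (Ψ t) ≤ dist u v * Real.exp (‖l‖₊ * K * (t - a)) := by
  have hab : a ≤ b := ht.1.trans ht.2
  refine dist_le_of_trajectories_ODE (v := fun _ x => l • G x)
    (fun _ => (lipschitzWith_smul l).comp hG)
    hΦc (fun s hs => hasDerivWithinAt_Ici_of_eq_add_smul_integral hG.continuous hΦc hΦ hs)
    hΨc (fun s hs => hasDerivWithinAt_Ici_of_eq_add_smul_integral hG.continuous hΨc hΨ hs)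
    ?_ t ht
  simp [hΦ a ⟨le_rfl, hab⟩, hΨ a ⟨le_rfl, hab⟩]

theorem norm_sub_sub_smul_sub_le {K : ℝ≥0} (hG : LipschitzWith K G) (hl : |l| ≤ 1)
    (hΦc : ContinuousOn Φ (Icc 0 1)) (hΨc : ContinuousOn Ψ (Icc 0 1))
    (hΦ : ∀ t ∈ Icc (0 : ℝ) 1, Φ t = u + l • ∫ s in (0 : ℝ)..t, G (Φ s))
    (hΨ : ∀ t ∈ Icc (0 : ℝ) 1, Ψ t = v + l • ∫ s in (0 : ℝ)..t, G (Ψ s)) :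
    ‖(Φ 1 - u - l • G u) - (Ψ 1 - v - l • G v)‖ ≤ (Real.exp K + 1 + K) * ‖u - v‖ := by
  have hflow : ‖Φ 1 - Ψ 1‖ ≤ ‖u - v‖ * Real.exp K := by
    have := dist_le_of_eq_add_smul_integral hG hΦc hΨc hΦ hΨ (right_mem_Icc.2 zero_le_one)
    rw [dist_eq_norm, dist_eq_norm, sub_zero, mul_one] at this
    refine this.trans (mul_le_mul_of_nonneg_left (Real.exp_le_exp.2 ?_) (norm_nonneg _))
    simpa [Real.norm_eq_abs] using mul_le_of_le_one_left K.2 hl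
  have hlin : ‖l • (G u - G v)‖ ≤ K * ‖u - v‖ := by
    rw [norm_smul, Real.norm_eq_abs, ← dist_eq_norm, ← dist_eq_norm]
    exact (mul_le_mul_of_nonneg_left (hG.dist_le_mul u v) (abs_nonneg l)).trans
      (mul_le_of_le_one_left (by positivity) hl)
  calc ‖(Φ 1 - u - l • G u) - (Ψ 1 - v - l • G v)‖
      = ‖(Φ 1 - Ψ 1) - (u - v) - l • (G u - G v)‖ := by rw [smul_sub]; abel_nf
    _ ≤ ‖Φ 1 - Ψ 1‖ + ‖u - v‖ + ‖l • (G u - G v)‖ :=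
        (norm_sub_le _ _).trans (add_le_add_left (norm_sub_le _ _) _)
    _ ≤ (Real.exp K + 1 + K) * ‖u - v‖ := by linarith

end IntegralEquation

theorem cross3_sub_left (a b c : EuclideanSpace ℝ (Fin 3)) :
    cross3 (a - b) c = cross3 a c - cross3 b c := by
  ext i
  fin_cases i <;>
    simp only [cross3, PiLp.sub_apply, PiLp.toLp_apply, Fin.zero_eta, Fin.mk_one, Fin.reduceFinMk,
      Matrix.cons_val_zero, Matrix.cons_val_one, Matrix.cons_val_two, Matrix.head_cons,
      Matrix.tail_cons] <;> ring

theorem norm_cross3_le (a b : EuclideanSpace ℝ (Fin 3)) : ‖cross3 a b‖ ≤ ‖a‖ * ‖b‖ := by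
  rw [EuclideanSpace.norm_eq, EuclideanSpace.norm_eq, EuclideanSpace.norm_eq,
    ← Real.sqrt_mul (by positivity)]
  apply Real.sqrt_le_sqrt
  simp only [Fin.sum_univ_three, Real.norm_eq_abs, sq_abs, cross3, PiLp.toLp_apply,
    Matrix.cons_val_zero, Matrix.cons_val_one, Matrix.cons_val_two, Matrix.head_cons,
    Matrix.tail_cons]
  -- Lagrange's identity: `‖a‖²‖b‖² = ‖a × b‖² + ⟪a, b⟫²`.
  nlinarith [sq_nonneg (a 0 * b 0 + a 1 * b 1 + a 2 * b 2)]

theorem lipschitzWith_of_ae_eq_cross3_add {𝒪 : Type*} [MeasurableSpace 𝒪] {μ : Measure 𝒪}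
    {h : 𝒪 → EuclideanSpace ℝ (Fin 3)} {K : ℝ≥0} (hK : ∀ᵐ x ∂μ, ‖h x‖ ≤ K)
    {g : Lp (EuclideanSpace ℝ (Fin 3)) 2 μ → Lp (EuclideanSpace ℝ (Fin 3)) 2 μ}
    (hg : ∀ v, ∀ᵐ x ∂μ, g v x = cross3 (v x) (h x) + h x) :
    LipschitzWith K g := by
  refine LipschitzWith.of_dist_le_mul fun a b => ?_
  rw [dist_eq_norm, dist_eq_norm]
  refine Lp.norm_le_mul_norm_of_ae_le_mul ?_
  filter_upwards [hg a, hg b, hK, Lp.coeFn_sub (g a) (g b), Lp.coeFn_sub a b]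
    with x hga hgb hKx hgab hab
  rw [hgab, hab, Pi.sub_apply, Pi.sub_apply, hga, hgb, add_sub_add_right_eq_sub,
    ← cross3_sub_left, mul_comm]
  exact (norm_cross3_le _ _).trans (mul_le_mul_of_nonneg_left hKx (norm_nonneg _))

theorem marcus_H_lipschitz_general
    {𝒪 : Type*} [MeasurableSpace 𝒪] (μ : Measure 𝒪)
    (h : 𝒪 → EuclideanSpace ℝ (Fin 3)) (hbdd : MemLp h ⊤ μ)
    (gbar : Lp (EuclideanSpace ℝ (Fin 3)) 2 μ → Lp (EuclideanSpace ℝ (Fin 3)) 2 μ)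
    (hgbar : ∀ v, ∀ᵐ x ∂μ, gbar v x = cross3 (v x) (h x) + h x) :
    ∃ C : ℝ, 0 < C ∧
      ∀ (l : ℝ), 0 < |l| → |l| < 1 →
      ∀ (u v : Lp (EuclideanSpace ℝ (Fin 3)) 2 μ)
        (Φu Φv : ℝ → Lp (EuclideanSpace ℝ (Fin 3)) 2 μ),
        ContinuousOn Φu (Set.Icc 0 1) → ContinuousOn Φv (Set.Icc 0 1) →
        (∀ t ∈ Set.Icc (0:ℝ) 1, Φu t = u + l • ∫ s in (0:ℝ)..t, gbar (Φu s)) →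
        (∀ t ∈ Set.Icc (0:ℝ) 1, Φv t = v + l • ∫ s in (0:ℝ)..t, gbar (Φv s)) →
        ‖(Φu 1 - u - l • gbar u) - (Φv 1 - v - l • gbar v)‖ ≤ C * ‖u - v‖ := by
  set K : ℝ≥0 := ⟨lpNorm h ∞ μ, lpNorm_nonneg⟩
  have hlip : LipschitzWith K gbar :=
    lipschitzWith_of_ae_eq_cross3_add (ae_le_lpNorm_exponent_top hbdd) hgbar
  refine ⟨Real.exp K + 1 + K, by positivity, fun l _ hl u v Φu Φv hΦuc hΦvc hΦu hΦv => ?_⟩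
  exact norm_sub_sub_smul_sub_le hlip hl.le hΦuc hΦvc hΦu hΦv

/-- Lipschitz continuity of the Marcus correction
`H(l,u) = Φ_u(1) − u − l ḡ(u)`, uniformly in `l ∈ B`. -/
theorem marcus_H_lipschitz
    {𝒪 : Type*} [MeasurableSpace 𝒪] (μ : Measure 𝒪) [IsFiniteMeasure μ]
    (h : 𝒪 → EuclideanSpace ℝ (Fin 3)) (hmeas : Measurable h) (hbdd : MemLp h ⊤ μ)
    (gbar : Lp (EuclideanSpace ℝ (Fin 3)) 2 μ → Lp (EuclideanSpace ℝ (Fin 3)) 2 μ)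
    (hgbar : ∀ v, ∀ᵐ x ∂μ, gbar v x = cross3 (v x) (h x) + h x) :
    ∃ C : ℝ, 0 < C ∧
      ∀ (l : ℝ), 0 < |l| → |l| < 1 →
      ∀ (u v : Lp (EuclideanSpace ℝ (Fin 3)) 2 μ)
        (Φu Φv : ℝ → Lp (EuclideanSpace ℝ (Fin 3)) 2 μ),
        ContinuousOn Φu (Set.Icc 0 1) → ContinuousOn Φv (Set.Icc 0 1) →
        (∀ t ∈ Set.Icc (0:ℝ) 1, Φu t = u + l • ∫ s in (0:ℝ)..t, gbar (Φu s)) →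
        (∀ t ∈ Set.Icc (0:ℝ) 1, Φv t = v + l • ∫ s in (0:ℝ)..t, gbar (Φv s)) →
        ‖(Φu 1 - u - l • gbar u) - (Φv 1 - v - l • gbar v)‖ ≤ C * ‖u - v‖ :=
  marcus_H_lipschitz_general μ h hbdd gbar hgbar
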